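/- arXiv:1909.13850 — 2 statements merged into one kernel-verified Lean document; each statement's English description precedes it below -/
import Mathlib

section
/- Let X and Y be pure simplicial complexes, X₀ ⊆ V(X) and Y₀ ⊆ V(Y), and assume that the pairs (sd X, X₀) and (sd Y, Y₀) are star decomposable in vertices. Then the pair (sd(X * Y), X₀ ⊔ Y₀) is star decomposable in vertices. Moreover, if |Y₀| = 1, then the pair (sd(X * Y), Y₀) is star decomposable in vertices. -/
/-! Common definitions: finite abstract simplicial complexes, links, stars,
barycentric subdivision, joins, collapsibility, shellability, vertex
decomposability, star decomposability (also "in vertices"), and simplicial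
homology (reduced, over ℤ and ℤ₂). -/

namespace Paper

open Finset

variable {V : Type*} [DecidableEq V]

/-- `K` is a (finite, abstract) simplicial complex: downward closed family of finsets. -/
def IsCplx (K : Finset (Finset V)) : Prop :=
  ∀ σ ∈ K, ∀ τ ⊆ σ, τ ∈ K

/-- Vertex set of a complex. -/
def verts (K : Finset (Finset V)) : Finset V := K.sup id

/-- Dimension of a complex (as an integer; `-1` for `∅` and `{∅}`). -/
def dim (K : Finset (Finset V)) : ℤ := ((K.sup Finset.card : ℕ) : ℤ) - 1

/-- The facets (inclusion-maximal faces) of `K`. -/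
def facets (K : Finset (Finset V)) : Finset (Finset V) :=
  K.filter fun σ => ∀ τ ∈ K, σ ⊆ τ → σ = τ

/-- `K` is pure `d`-dimensional: it is nonempty, every face has dimension at most `d`
and every face is contained in a face of dimension exactly `d`. -/
def PureDim (K : Finset (Finset V)) (d : ℤ) : Prop :=
  K.Nonempty ∧ (∀ σ ∈ K, (σ.card : ℤ) ≤ d + 1) ∧
    ∀ σ ∈ K, ∃ τ ∈ K, σ ⊆ τ ∧ (τ.card : ℤ) = d + 1

/-- Link of a face. -/
def lk (σ : Finset V) (K : Finset (Finset V)) : Finset (Finset V) :=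
  (K.filter fun τ => σ ⊆ τ).image fun τ => τ \ σ

/-- Closed star of a face. -/
def star (σ : Finset V) (K : Finset (Finset V)) : Finset (Finset V) :=
  K.filter fun τ => τ ∪ σ ∈ K

/-- Union of the closed stars of a set of vertices. -/
def starSet (S : Finset V) (K : Finset (Finset V)) : Finset (Finset V) :=
  K.filter fun τ => ∃ v ∈ S, τ ∪ {v} ∈ K

/-- Subcomplex induced on a vertex set `S`. -/
def induced (S : Finset V) (K : Finset (Finset V)) : Finset (Finset V) :=
  K.filter fun σ => σ ⊆ S

/-- Deletion of a vertex:  `K - v`. -/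
def deleteV (v : V) (K : Finset (Finset V)) : Finset (Finset V) :=
  K.filter fun σ => v ∉ σ

/-- The full simplex on vertex set `σ`. -/
def simplexCplx (σ : Finset V) : Finset (Finset V) := σ.powerset

/-- The boundary `∂σ` of the simplex on `σ`: all proper subsets of `σ`. -/
def bdSimplex (σ : Finset V) : Finset (Finset V) := σ.powerset.erase σ

/-- Barycentric subdivision: vertices are the nonempty faces of `K`, faces are
chains of nonempty faces of `K`. -/
def sd (K : Finset (Finset V)) : Finset (Finset (Finset V)) :=
  if K = ∅ then ∅ else
    K.powerset.filter fun c => (∅ ∉ c) ∧ ∀ σ ∈ c, ∀ τ ∈ c, σ ⊆ τ ∨ τ ⊆ σ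

/-- Join of two simplicial complexes (on the disjoint union of vertex types). -/
def join {α β : Type*} [DecidableEq α] [DecidableEq β]
    (X : Finset (Finset α)) (Y : Finset (Finset β)) : Finset (Finset (α ⊕ β)) :=
  (X ×ˢ Y).image fun p => p.1.image Sum.inl ∪ p.2.image Sum.inr

/-- `K'` arises from `K` by an elementary collapse: remove a free face `σ`
together with the unique face `τ` properly containing it. -/
def ElemCollapse (K K' : Finset (Finset V)) : Prop :=
  ∃ σ ∈ K, ∃ τ ∈ K, σ ⊂ τ ∧ (∀ ρ ∈ K, σ ⊂ ρ → ρ = τ) ∧ K' = (K.erase σ).erase τ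

/-- `K` collapses to `K'`. -/
def CollapsesTo (K K' : Finset (Finset V)) : Prop :=
  Relation.ReflTransGen ElemCollapse K K'

/-- `K` is collapsible: it collapses to a single vertex. -/
def Collapsible (K : Finset (Finset V)) : Prop :=
  ∃ w : V, CollapsesTo K ({∅, {w}} : Finset (Finset V))

/-- The removal-collapsibility condition: `K` is empty, or becomes collapsible
after removal of a set of facets. -/
def RC (K : Finset (Finset V)) : Prop :=
  K = ∅ ∨ ∃ F ⊆ facets K, Collapsible (K \ F)

/-- The hereditary removal-collapsibility condition: the link of every face
(including the empty face, whose link is `K` itself) satisfies (RC). -/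
def HRC (K : Finset (Finset V)) : Prop :=
  ∀ σ ∈ K, RC (lk σ K)

/-- `K` is shellable: there is a total order of its facets such that each facet
meets the union of the previous ones in a pure complex of codimension one. -/
def Shellable (K : Finset (Finset V)) : Prop :=
  ∃ L : List (Finset V), L.Nodup ∧ L.toFinset = facets K ∧
    ∀ i : ℕ, (hi : i < L.length) → 1 ≤ i →
      PureDim ((L.get ⟨i, hi⟩).powerset ∩ ((L.take i).map Finset.powerset).foldr (· ∪ ·) ∅)
        (((L.get ⟨i, hi⟩).card : ℤ) - 2)

/-- Vertex decomposability (Provan–Billera) of a pure complex. -/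
inductive VD : Finset (Finset V) → Prop
  | simplex (σ : Finset V) : VD σ.powerset
  | shed (K : Finset (Finset V)) (v : V) (hv : {v} ∈ K)
      (hdel : PureDim (deleteV v K) (dim K)) (hVDdel : VD (deleteV v K))
      (hlk : PureDim (lk {v} K) (dim K - 1)) (hVDlk : VD (lk {v} K)) : VD K

/-- `L` is a shedding order of `K` (a total order on `V(K)`, given as a
duplicate-free list, witnessing vertex decomposability; once a simplex is
reached, an arbitrary order of its vertices qualifies). -/
inductive SheddingOrder : List V → Finset (Finset V) → Prop
  | simplex (σ : Finset V) (L : List V) (hnd : L.Nodup) (hfin : L.toFinset = σ) :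
      SheddingOrder L σ.powerset
  | cons (v : V) (L : List V) (K : Finset (Finset V)) (hv : {v} ∈ K) (hvL : v ∉ L)
      (hcov : insert v L.toFinset = verts K)
      (hdel : PureDim (deleteV v K) (dim K))
      (hrest : SheddingOrder L (deleteV v K))
      (hlk : PureDim (lk {v} K) (dim K - 1)) (hVDlk : VD (lk {v} K)) :
      SheddingOrder (v :: L) K

/-- `W` induces a star partition of `X`: the stars of the vertices of `W`
cover `X` and no two distinct vertices of `W` lie in a common face. -/
def StarPartition (W : Finset V) (X : Finset (Finset V)) : Prop :=
  (∀ σ ∈ X, ∃ w ∈ W, σ ∪ {w} ∈ X) ∧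
    ∀ w₁ ∈ W, ∀ w₂ ∈ W, w₁ ≠ w₂ → ¬∃ σ ∈ X, w₁ ∈ σ ∧ w₂ ∈ σ

/-- The overlap `O_X(x, W') = lk(x,X) ∩ st(W',X)`. -/
def overlap (X : Finset (Finset V)) (x : V) (W' : Finset V) : Finset (Finset V) :=
  lk {x} X ∩ starSet W' X

/-- Star decomposability of the pair `(X, X₀)`.  The total order on the set `W`
inducing the star partition is encoded as a duplicate-free list `L` (earlier in
the list = smaller in the order). -/
inductive StarDec : Finset (Finset V) → Finset V → Prop
  | base : StarDec ({∅} : Finset (Finset V)) (∅ : Finset V)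
  | step (X : Finset (Finset V)) (X₀ : Finset V) (k : ℤ) (hk : 0 ≤ k) (hpure : PureDim X k)
      (L : List V) (hne : L ≠ []) (hnd : L.Nodup) (hsub : L.toFinset ⊆ verts X)
      (hsp : StarPartition L.toFinset X)
      (horder : ∃ i < L.length, X₀ = (L.drop i).toFinset)
      (U : ℕ → Finset V)
      (hUne : ∀ i, i + 1 < L.length → (U i).Nonempty)
      (hUsub : ∀ i, (hi : i + 1 < L.length) →
        U i ⊆ verts (lk {L.get ⟨i, Nat.lt_of_succ_lt hi⟩} X))
      (hUst : ∀ i, (hi : i + 1 < L.length) →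
        starSet (U i) (lk {L.get ⟨i, Nat.lt_of_succ_lt hi⟩} X) =
          overlap X (L.get ⟨i, Nat.lt_of_succ_lt hi⟩) ((L.drop (i + 1)).toFinset))
      (hlink : ∀ i, (hi : i + 1 < L.length) →
        StarDec (lk {L.get ⟨i, Nat.lt_of_succ_lt hi⟩} X) (U i))
      (Ulast : Finset V)
      (hlast : StarDec (lk {L.getLast hne} X) Ulast) :
      StarDec X X₀

/-- The order encoded by the list `L` induces a star decomposition of `(X, X₀)`. -/
def InducesStarDecomp (L : List V) (X : Finset (Finset V)) (X₀ : Finset V) : Prop :=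
  (L = [] ∧ X = ({∅} : Finset (Finset V)) ∧ X₀ = ∅) ∨
  ∃ hne : L ≠ [], L.Nodup ∧ StarPartition L.toFinset X ∧
    (∃ i < L.length, X₀ = (L.drop i).toFinset) ∧
    (∀ i, (hi : i + 1 < L.length) →
      ∃ U : Finset V, U.Nonempty ∧ U ⊆ verts (lk {L.get ⟨i, Nat.lt_of_succ_lt hi⟩} X) ∧
        starSet U (lk {L.get ⟨i, Nat.lt_of_succ_lt hi⟩} X) =
          overlap X (L.get ⟨i, Nat.lt_of_succ_lt hi⟩) ((L.drop (i + 1)).toFinset) ∧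
        StarDec (lk {L.get ⟨i, Nat.lt_of_succ_lt hi⟩} X) U) ∧
    (∃ U : Finset V, StarDec (lk {L.getLast hne} X) U)

/-- Star decomposability *in vertices* of the pair `(sd Y, Y₀)`; the data is the
underlying complex `Y` together with `Y₀ ⊆ V(Y)`.  The total order on `V(Y)` is
encoded as a duplicate-free list `L`. -/
inductive StarDecV : Finset (Finset V) → Finset V → Prop
  | base : StarDecV ({∅} : Finset (Finset V)) (∅ : Finset V)
  | step (Y : Finset (Finset V)) (Y₀ : Finset V) (k : ℤ) (hk : 0 ≤ k) (hpure : PureDim Y k)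
      (L : List V) (hne : L ≠ []) (hnd : L.Nodup) (hV : L.toFinset = verts Y)
      (horder : ∃ i < L.length, Y₀ = (L.drop i).toFinset)
      (hlink : ∀ i, (hi : i + 1 < L.length) →
        StarDecV (lk {L.get ⟨i, Nat.lt_of_succ_lt hi⟩} Y)
          (verts (lk {L.get ⟨i, Nat.lt_of_succ_lt hi⟩} Y) ∩ (L.drop (i + 1)).toFinset))
      (hlast : StarDecV (lk {L.getLast hne} Y) (verts (lk {L.getLast hne} Y))) :
      StarDecV Y Y₀

/-- The order encoded by the list `L` induces a star decomposition of
`(sd Y, Y₀)` in vertices. -/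
def InducesStarDecompV (L : List V) (Y : Finset (Finset V)) (Y₀ : Finset V) : Prop :=
  (L = [] ∧ Y = ({∅} : Finset (Finset V)) ∧ Y₀ = ∅) ∨
  ∃ hne : L ≠ [], L.Nodup ∧ L.toFinset = verts Y ∧
    (∃ i < L.length, Y₀ = (L.drop i).toFinset) ∧
    (∀ i, (hi : i + 1 < L.length) →
      StarDecV (lk {L.get ⟨i, Nat.lt_of_succ_lt hi⟩} Y)
        (verts (lk {L.get ⟨i, Nat.lt_of_succ_lt hi⟩} Y) ∩ (L.drop (i + 1)).toFinset)) ∧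
    StarDecV (lk {L.getLast hne} Y) (verts (lk {L.getLast hne} Y))

/-- Simplicial isomorphism between two complexes. -/
def SimpIso {α β : Type*} [DecidableEq α] [DecidableEq β]
    (K : Finset (Finset α)) (L : Finset (Finset β)) : Prop :=
  ∃ f : α → β, Set.InjOn f ↑(verts K) ∧ K.image (fun σ => σ.image f) = L

/-- Simplicial isomorphism of pairs (complex, subcomplex). -/
def SimpIsoPair {α β : Type*} [DecidableEq α] [DecidableEq β]
    (K K₁ : Finset (Finset α)) (L L₁ : Finset (Finset β)) : Prop :=
  ∃ f : α → β, Set.InjOn f ↑(verts K) ∧ K.image (fun σ => σ.image f) = L ∧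
    K₁.image (fun σ => σ.image f) = L₁

/-! Reduced simplicial homology (the empty face is included, so the chain
complex below, graded by cardinality of faces, computes *reduced* homology). -/

/-- Faces of `K` of cardinality `n`. -/
def kfaces (K : Finset (Finset V)) (n : ℕ) : Finset (Finset V) :=
  K.filter fun σ => σ.card = n

/-- The mod 2 boundary operator, from chains on faces of cardinality `n+1`
to chains on faces of cardinality `n`. -/
noncomputable def bdry2 (K : Finset (Finset V)) (n : ℕ) :
    (↥(kfaces K (n + 1)) → ZMod 2) →ₗ[ZMod 2] (↥(kfaces K n) → ZMod 2) :=
  Matrix.mulVecLin (Matrix.of fun (τ : ↥(kfaces K n)) (σ : ↥(kfaces K (n + 1))) =>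
    if (τ : Finset V) ⊆ (σ : Finset V) then (1 : ZMod 2) else 0)

/-- The reduced Betti number `β̃ᵢ(K; ℤ₂)`. -/
noncomputable def betti2 (K : Finset (Finset V)) (i : ℕ) : ℕ :=
  Module.finrank (ZMod 2) (LinearMap.ker (bdry2 K i)) -
    Module.finrank (ZMod 2) (LinearMap.range (bdry2 K (i + 1)))

/-- Signed incidence coefficient (with respect to an arbitrary, but fixed,
linear order on the vertices; reduced homology does not depend on the choice). -/
noncomputable def coeffInt (σ τ : Finset V) : ℤ :=
  letI : LinearOrder V := IsWellOrder.linearOrder WellOrderingRel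
  (σ \ τ).sum fun v => (-1 : ℤ) ^ ((σ.filter fun u => u < v).card)

/-- The integral boundary operator, from chains on faces of cardinality `n+1`
to chains on faces of cardinality `n`. -/
noncomputable def bdryZ (K : Finset (Finset V)) (n : ℕ) :
    (↥(kfaces K (n + 1)) → ℤ) →ₗ[ℤ] (↥(kfaces K n) → ℤ) :=
  Matrix.mulVecLin (Matrix.of fun (τ : ↥(kfaces K n)) (σ : ↥(kfaces K (n + 1))) =>
    if (τ : Finset V) ⊆ (σ : Finset V) then coeffInt (σ : Finset V) (τ : Finset V) else 0)

/-- `K` has trivial reduced (integral) homology: `H̃ₙ(K; ℤ) = 0` for all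
`n ≥ -1`. -/
def TrivialRedHomology (K : Finset (Finset V)) : Prop :=
  K.Nonempty ∧ LinearMap.range (bdryZ K 0) = ⊤ ∧
    ∀ n : ℕ, LinearMap.ker (bdryZ K n) = LinearMap.range (bdryZ K (n + 1))

/-- Reduced Euler characteristic. -/
def redEuler (K : Finset (Finset V)) : ℤ :=
  (∑ σ ∈ K.filter fun σ => σ ≠ ∅, (-1 : ℤ) ^ (σ.card - 1)) - 1

/-!
Write the vertex orders of `X` and `Y` as `A, C` and `B, y₀`, where `C` lists `X₀` and `y₀` is
the last vertex of `Y`, and order the vertices of `X * Y` as `A, B, C, y₀`; both `X₀ ⊔ Y₀` and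
(when `Y₀ = {y₀}`) `{y₀}` are final segments of this order. Since `lk(x, X * Y) = lk(x, X) * Y`
and `lk(y, X * Y) = X * lk(y, Y)`, each link condition is an instance of the theorem for a pair of
smaller total dimension: for `x ∈ A` paired with `(Y, V(Y))`, for `y ∈ B` with `(X, X₀)`, for
`x ∈ C` with `(Y, {y₀})` and for `y₀` with `(X, V(X))`. For the last vertex of `C`, followed
only by `y₀`, this is the second statement, which is why both are proved together.
-/

theorem mem_verts {K : Finset (Finset V)} {v : V} : v ∈ verts K ↔ ∃ σ ∈ K, v ∈ σ := by
  simp [verts]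

theorem mem_lk {K : Finset (Finset V)} {v : V} {τ : Finset V} :
    τ ∈ lk {v} K ↔ ∃ σ ∈ K, v ∈ σ ∧ σ \ {v} = τ := by
  simp [lk, and_assoc]

theorem lk_nonempty {K : Finset (Finset V)} {v : V} (hv : v ∈ verts K) : (lk {v} K).Nonempty := by
  obtain ⟨σ, hσ, hvσ⟩ := mem_verts.1 hv
  exact ⟨_, mem_lk.2 ⟨σ, hσ, hvσ, rfl⟩⟩

theorem sup_card_lk_lt {K : Finset (Finset V)} {v : V} (hv : v ∈ verts K) :
    (lk {v} K).sup card < K.sup card := by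
  obtain ⟨σ, hσ, hvσ⟩ := mem_verts.1 hv
  have hpos : 0 < K.sup card := (card_pos.2 ⟨v, hvσ⟩).trans_le (le_sup hσ)
  refine (Finset.sup_lt_iff hpos).2 fun τ hτ => ?_
  obtain ⟨ρ, hρ, hvρ, rfl⟩ := mem_lk.1 hτ
  rw [sdiff_singleton_eq_erase]
  exact (card_erase_lt_of_mem hvρ).trans_le (le_sup hρ)

theorem _root_.List.toFinset_map {γ δ : Type*} [DecidableEq γ] [DecidableEq δ] (f : γ → δ)
    (l : List γ) : (l.map f).toFinset = l.toFinset.image f := by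
  ext; simp

section Relabel

variable {W : Type*} [DecidableEq W] {f : V → W}

theorem verts_image (K : Finset (Finset V)) : verts (K.image (image f)) = (verts K).image f := by
  ext w
  simp only [mem_verts, mem_image]
  grind

theorem lk_image (hf : Function.Injective f) (K : Finset (Finset V)) (v : V) :
    lk {f v} (K.image (image f)) = (lk {v} K).image (image f) := by
  ext τ
  simp only [mem_lk, mem_image]
  constructor
  · rintro ⟨_, ⟨σ, hσ, rfl⟩, hv, rfl⟩
    have hv : v ∈ σ := hf.mem_finset_image.1 hv
    exact ⟨σ \ {v}, ⟨σ, hσ, hv, rfl⟩, by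
      rw [image_sdiff_of_injOn hf.injOn (singleton_subset_iff.2 hv), image_singleton]⟩
  · rintro ⟨_, ⟨σ, hσ, hv, rfl⟩, rfl⟩
    exact ⟨σ.image f, ⟨σ, hσ, rfl⟩, mem_image_of_mem f hv, by
      rw [image_sdiff_of_injOn hf.injOn (singleton_subset_iff.2 hv), image_singleton]⟩

omit [DecidableEq V] in
theorem PureDim.image (hf : Function.Injective f) {K : Finset (Finset V)} {k : ℤ}
    (hK : PureDim K k) : PureDim (K.image (image f)) k := by
  obtain ⟨hne, hbd, hext⟩ := hK
  refine ⟨hne.image _, ?_, ?_⟩ <;> simp only [forall_mem_image, card_image_of_injective _ hf]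
  · exact hbd
  · intro σ hσ
    obtain ⟨τ, hτ, hστ, hcard⟩ := hext σ hσ
    exact ⟨_, mem_image_of_mem _ hτ, image_subset_image hστ, by rwa [card_image_of_injective _ hf]⟩

theorem StarDecV.image (hf : Function.Injective f) {K : Finset (Finset V)} {K₀ : Finset V}
    (h : StarDecV K K₀) : StarDecV (K.image (image f)) (K₀.image f) := by
  induction h with
  | base => simpa using StarDecV.base
  | step K _ k hk hpure L hne hnd hV horder _ _ ihlink ihlast =>
    obtain ⟨i, hi, rfl⟩ := horder
    refine .step _ _ k hk (hpure.image hf) (L.map f) (by simpa using hne) (hnd.map hf)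
      (by rw [List.toFinset_map, hV, verts_image])
      ⟨i, by simpa using hi, by rw [← List.map_drop, List.toFinset_map]⟩ ?_ ?_
    · intro i hi
      simp only [List.length_map] at hi
      convert ihlink i hi using 1
      · simp [lk_image hf]
      · simp only [List.get_eq_getElem, List.getElem_map, lk_image hf, verts_image,
          image_inter _ _ hf, ← List.map_drop, List.toFinset_map]
    · simpa [lk_image hf, verts_image] using ihlast

end Relabel

section Join

variable {α β : Type*} [DecidableEq α] [DecidableEq β] {X : Finset (Finset α)}
  {Y : Finset (Finset β)}

theorem image_inl_union_image_inr (s : Finset α) (t : Finset β) :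
    s.image Sum.inl ∪ t.image Sum.inr = s.disjSum t := by
  ext (a | b) <;> simp

theorem mem_join {τ : Finset (α ⊕ β)} : τ ∈ join X Y ↔ ∃ σ ∈ X, ∃ ρ ∈ Y, σ.disjSum ρ = τ := by
  simp [join, image_inl_union_image_inr, and_assoc, exists_and_left]

theorem join_empty_left (Y : Finset (Finset β)) :
    join ({∅} : Finset (Finset α)) Y = Y.image (image Sum.inr) := by
  ext τ
  simp [join]

theorem join_empty_right (X : Finset (Finset α)) :
    join X ({∅} : Finset (Finset β)) = X.image (image Sum.inl) := by
  ext τ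
  simp [join]

theorem verts_join (hX : X.Nonempty) (hY : Y.Nonempty) :
    verts (join X Y) = (verts X).disjSum (verts Y) := by
  obtain ⟨σ₀, hσ₀⟩ := hX
  obtain ⟨ρ₀, hρ₀⟩ := hY
  ext (a | b) <;> simp only [mem_verts, mem_join, inl_mem_disjSum, inr_mem_disjSum]
  · exact ⟨fun ⟨_, ⟨σ, hσ, ρ, _, rfl⟩, ha⟩ => ⟨σ, hσ, by simpa using ha⟩,
      fun ⟨σ, hσ, ha⟩ => ⟨_, ⟨σ, hσ, ρ₀, hρ₀, rfl⟩, by simpa using ha⟩⟩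
  · exact ⟨fun ⟨_, ⟨σ, _, ρ, hρ, rfl⟩, hb⟩ => ⟨ρ, hρ, by simpa using hb⟩,
      fun ⟨ρ, hρ, hb⟩ => ⟨_, ⟨σ₀, hσ₀, ρ, hρ, rfl⟩, by simpa using hb⟩⟩

theorem lk_inl_join (x : α) : lk {Sum.inl x} (join X Y) = join (lk {x} X) Y := by
  ext τ
  simp only [mem_lk, mem_join]
  constructor
  · rintro ⟨_, ⟨σ, hσ, ρ, hρ, rfl⟩, hx, rfl⟩
    exact ⟨σ \ {x}, ⟨σ, hσ, by simpa using hx, rfl⟩, ρ, hρ, by ext (a | b) <;> simp⟩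
  · rintro ⟨_, ⟨σ, hσ, hx, rfl⟩, ρ, hρ, rfl⟩
    exact ⟨σ.disjSum ρ, ⟨σ, hσ, ρ, hρ, rfl⟩, by simpa using hx, by ext (a | b) <;> simp⟩

theorem lk_inr_join (y : β) : lk {Sum.inr y} (join X Y) = join X (lk {y} Y) := by
  ext τ
  simp only [mem_lk, mem_join]
  constructor
  · rintro ⟨_, ⟨σ, hσ, ρ, hρ, rfl⟩, hy, rfl⟩
    exact ⟨σ, hσ, ρ \ {y}, ⟨ρ, hρ, by simpa using hy, rfl⟩, by ext (a | b) <;> simp⟩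
  · rintro ⟨σ, hσ, _, ⟨ρ, hρ, hy, rfl⟩, rfl⟩
    exact ⟨σ.disjSum ρ, ⟨σ, hσ, ρ, hρ, rfl⟩, by simpa using hy, by ext (a | b) <;> simp⟩

theorem PureDim.join {a b : ℤ} (hX : PureDim X a) (hY : PureDim Y b) :
    PureDim (join X Y) (a + b + 1) := by
  obtain ⟨⟨σ₀, hσ₀⟩, hXbd, hXext⟩ := hX
  obtain ⟨⟨ρ₀, hρ₀⟩, hYbd, hYext⟩ := hY
  refine ⟨⟨_, mem_join.2 ⟨σ₀, hσ₀, ρ₀, hρ₀, rfl⟩⟩, ?_, ?_⟩ <;>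
    simp only [mem_join, forall_exists_index, and_imp]
  · rintro _ σ hσ ρ hρ rfl
    have := hXbd σ hσ
    have := hYbd ρ hρ
    push_cast [card_disjSum]
    omega
  · rintro _ σ hσ ρ hρ rfl
    obtain ⟨σ', hσ', hσσ', hσ'card⟩ := hXext σ hσ
    obtain ⟨ρ', hρ', hρρ', hρ'card⟩ := hYext ρ hρ
    refine ⟨σ'.disjSum ρ', ⟨σ', hσ', ρ', hρ', rfl⟩, disjSum_mono hσσ' hρρ', ?_⟩
    push_cast [card_disjSum]
    omega

end Join

/-- A total order on `V(K)` (earlier in `L` = smaller) satisfying the link and last-vertex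
conditions; the sets `V(K)_{≻w}` and `V(K)_{⪰w}` are the suffixes of `L`. -/
structure IsStarDecVOrder (K : Finset (Finset V)) (L : List V) : Prop where
  pure : ∃ k, 0 ≤ k ∧ PureDim K k
  nodup : L.Nodup
  toFinset_eq : L.toFinset = verts K
  link : ∀ v S, v :: S <:+ L → S ≠ [] → StarDecV (lk {v} K) (verts (lk {v} K) ∩ S.toFinset)
  last : ∀ v, [v] <:+ L → StarDecV (lk {v} K) (verts (lk {v} K))

namespace IsStarDecVOrder

variable {K : Finset (Finset V)} {L S : List V}

theorem nonempty (hL : IsStarDecVOrder K L) : K.Nonempty :=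
  let ⟨_, _, hpure⟩ := hL.pure
  hpure.1

theorem mem_verts_iff (hL : IsStarDecVOrder K L) {v : V} : v ∈ verts K ↔ v ∈ L := by
  rw [← hL.toFinset_eq, List.mem_toFinset]

theorem starDecV (hL : IsStarDecVOrder K L) (hS : S <:+ L) (hne : S ≠ []) :
    StarDecV K S.toFinset := by
  obtain ⟨k, hk, hpure⟩ := hL.pure
  have hlen : 0 < S.length := List.length_pos_iff.2 hne
  refine .step K _ k hk hpure L (by rintro rfl; exact hne (List.suffix_nil.1 hS)) hL.nodup
    hL.toFinset_eq ⟨L.length - S.length, by have := hS.length_le; omega,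
      by rw [← List.suffix_iff_eq_drop.1 hS]⟩ (fun i hi => ?_) ?_
  · refine hL.link _ _ ?_ (by simpa [List.drop_eq_nil_iff] using hi)
    rw [List.get_eq_getElem, ← List.drop_eq_getElem_cons]
    exact List.drop_suffix i L
  · exact hL.last _
      (List.singleton_suffix_iff_getLast?_eq_some.2 (List.getLast?_eq_some_getLast _))

theorem starDecV_verts (hL : IsStarDecVOrder K L) (hne : L ≠ []) : StarDecV K (verts K) :=
  hL.toFinset_eq ▸ hL.starDecV List.suffix_rfl hne

theorem starDecV_inter (hL : IsStarDecVOrder K L) (hS : S <:+ L) (hne : S ≠ []) :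
    StarDecV K (verts K ∩ S.toFinset) := by
  rw [inter_eq_right.2 fun v hv => hL.mem_verts_iff.2 (hS.subset (List.mem_toFinset.1 hv))]
  exact hL.starDecV hS hne

end IsStarDecVOrder

theorem StarDecV.exists_order {K : Finset (Finset V)} {K₀ : Finset V} (h : StarDecV K K₀) :
    (K = {∅} ∧ K₀ = ∅) ∨
      ∃ L S, IsStarDecVOrder K L ∧ S <:+ L ∧ S ≠ [] ∧ K₀ = S.toFinset := by
  cases h with
  | base => exact .inl ⟨rfl, rfl⟩
  | step _ _ k hk hpure L hne hnd hV horder hlink hlast =>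
    obtain ⟨i, hi, rfl⟩ := horder
    refine .inr ⟨L, _, ⟨⟨k, hk, hpure⟩, hnd, hV, fun v S hS hSne => ?_, fun v hv => ?_⟩,
      List.drop_suffix i L, by simpa [List.drop_eq_nil_iff] using hi, rfl⟩
    · obtain ⟨j, hj, hvS⟩ : ∃ j, ∃ hj : j < L.length, L.drop j = v :: S := by
        have hlen := hS.length_le
        rw [List.length_cons] at hlen
        refine ⟨L.length - (S.length + 1), by omega, ?_⟩
        simpa using (List.suffix_iff_eq_drop.1 hS).symm
      rw [List.drop_eq_getElem_cons hj, List.cons.injEq] at hvS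
      obtain ⟨rfl, rfl⟩ := hvS
      simpa using hlink j (by simpa [List.drop_eq_nil_iff] using hSne)
    · rw [List.singleton_suffix_iff_getLast?_eq_some, List.getLast?_eq_some_getLast hne,
        Option.some_inj] at hv
      exact hv ▸ hlast

theorem _root_.List.cons_suffix_map_append {γ δ : Type*} {f : γ → δ} {l₁ : List γ}
    {l₂ S : List δ} {v : δ} (h : v :: S <:+ l₁.map f ++ l₂) :
    v :: S <:+ l₂ ∨ ∃ x T, x :: T <:+ l₁ ∧ v = f x ∧ S = T.map f ++ l₂ := by
  obtain ⟨t, ht⟩ := h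
  rcases List.append_eq_append_iff.1 ht with ⟨_ | ⟨a, as⟩, hmap, hvS⟩ | ⟨bs, -, hl₂⟩
  · exact .inl (by simpa using hvS ▸ List.suffix_rfl)
  · obtain ⟨rfl, rfl⟩ := List.cons.inj hvS
    obtain ⟨_ | ⟨x, T⟩, hsuf, hT⟩ := List.suffix_map_iff.1 ⟨t, hmap.symm⟩
    · simp at hT
    · obtain ⟨rfl, rfl⟩ := List.cons.inj hT
      exact .inr ⟨x, T, hsuf, rfl, rfl⟩
  · exact .inl ⟨bs, hl₂.symm⟩

section JoinOrder

variable {α β : Type*} [DecidableEq α] [DecidableEq β] {X : Finset (Finset α)}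
  {Y : Finset (Finset β)}

theorem disjSum_inter_disjSum (s s' : Finset α) (t t' : Finset β) :
    s.disjSum t ∩ s'.disjSum t' = (s ∩ s').disjSum (t ∩ t') := by
  ext (a | b) <;> simp

def JoinPreservesStarDecV (X : Finset (Finset α)) (Y : Finset (Finset β)) : Prop :=
  ∀ X₀ Y₀, StarDecV X X₀ → StarDecV Y Y₀ →
    StarDecV (join X Y) (X₀.disjSum Y₀) ∧ ∀ y, Y₀ = {y} → StarDecV (join X Y) {Sum.inr y}

theorem starDecV_lk_inl_join {x : α} {s : Finset α} {t : Finset β} (hx : x ∈ verts X)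
    (hY : Y.Nonempty) (ih : JoinPreservesStarDecV (lk {x} X) Y)
    (h₁ : StarDecV (lk {x} X) (verts (lk {x} X) ∩ s)) (h₂ : StarDecV Y (verts Y ∩ t)) :
    StarDecV (lk {Sum.inl x} (join X Y)) (verts (lk {Sum.inl x} (join X Y)) ∩ s.disjSum t) := by
  rw [lk_inl_join, verts_join (lk_nonempty hx) hY, disjSum_inter_disjSum]
  exact (ih _ _ h₁ h₂).1

theorem starDecV_lk_inr_join {y : β} {s : Finset α} {t : Finset β} (hy : y ∈ verts Y)
    (hX : X.Nonempty) (ih : JoinPreservesStarDecV X (lk {y} Y))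
    (h₁ : StarDecV X (verts X ∩ s)) (h₂ : StarDecV (lk {y} Y) (verts (lk {y} Y) ∩ t)) :
    StarDecV (lk {Sum.inr y} (join X Y)) (verts (lk {Sum.inr y} (join X Y)) ∩ s.disjSum t) := by
  rw [lk_inr_join, verts_join hX (lk_nonempty hy), disjSum_inter_disjSum]
  exact (ih _ _ h₁ h₂).1

theorem starDecV_lk_inl_join_singleton {x : α} {y : β} {X₁ : Finset α} (hx : x ∈ verts X)
    (hy : y ∈ verts Y) (ih : JoinPreservesStarDecV (lk {x} X) Y) (h₁ : StarDecV (lk {x} X) X₁)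
    (h₂ : StarDecV Y {y}) :
    StarDecV (lk {Sum.inl x} (join X Y)) (verts (lk {Sum.inl x} (join X Y)) ∩ {Sum.inr y}) := by
  have hY : Y.Nonempty := (mem_verts.1 hy).imp fun _ h => h.1
  rw [lk_inl_join, inter_eq_right.2 (by simp [verts_join (lk_nonempty hx) hY, hy])]
  exact (ih _ _ h₁ h₂).2 y rfl

variable {Ax Cx : List α} {By : List β} {y₀ : β}

theorem IsStarDecVOrder.join_link (hX : IsStarDecVOrder X (Ax ++ Cx))
    (hY : IsStarDecVOrder Y (By ++ [y₀])) (hCx : Cx ≠ [])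
    (ihX : ∀ x ∈ verts X, JoinPreservesStarDecV (lk {x} X) Y)
    (ihY : ∀ y ∈ verts Y, JoinPreservesStarDecV X (lk {y} Y)) {v : α ⊕ β} {S : List (α ⊕ β)}
    (h : v :: S <:+ Ax.map Sum.inl ++ (By.map Sum.inr ++ (Cx.map Sum.inl ++ [Sum.inr y₀])))
    (hS : S ≠ []) :
    StarDecV (lk {v} (join X Y)) (verts (lk {v} (join X Y)) ∩ S.toFinset) := by
  rcases List.cons_suffix_map_append h with h | ⟨x, T, hxT, rfl, rfl⟩
  · rcases List.cons_suffix_map_append h with h | ⟨y, T, hyT, rfl, rfl⟩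
    · rcases List.cons_suffix_map_append h with h | ⟨x, T, hxT, rfl, rfl⟩
      · exact absurd (List.length_eq_zero_iff.1 (by simpa using h.length_le)) hS
      have hxT' : x :: T <:+ Ax ++ Cx := List.suffix_append_of_suffix hxT
      have hx : x ∈ verts X := hX.mem_verts_iff.2 (hxT'.subset (by simp))
      rcases eq_or_ne T [] with rfl | hT
      · convert starDecV_lk_inl_join_singleton hx ((hY.mem_verts_iff (v := y₀)).2 (by simp))
          (ihX x hx) (hX.last x hxT')
          (by simpa using hY.starDecV (List.suffix_append By [y₀]) (by simp)) using 2
        simp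
      · convert starDecV_lk_inl_join hx hY.nonempty (ihX x hx) (hX.link x T hxT' hT)
          (hY.starDecV_inter (List.suffix_append By [y₀]) (by simp)) using 2
        ext (a | b) <;> simp
    have hyT' : y :: (T ++ [y₀]) <:+ By ++ [y₀] := List.suffix_append_self_iff.2 hyT
    have hy : y ∈ verts Y := hY.mem_verts_iff.2 (hyT'.subset (by simp))
    convert starDecV_lk_inr_join hy hX.nonempty (ihY y hy)
      (hX.starDecV_inter (List.suffix_append Ax Cx) hCx) (hY.link y _ hyT' (by simp)) using 2
    ext (a | b) <;> simp
  have hxT' : x :: (T ++ Cx) <:+ Ax ++ Cx := List.suffix_append_self_iff.2 hxT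
  have hx : x ∈ verts X := hX.mem_verts_iff.2 (hxT'.subset (by simp))
  convert starDecV_lk_inl_join hx hY.nonempty (ihX x hx) (hX.link x _ hxT' (by simp [hCx]))
    (hY.starDecV_inter List.suffix_rfl (by simp)) using 2
  ext (a | b) <;> simp

theorem IsStarDecVOrder.join (hX : IsStarDecVOrder X (Ax ++ Cx))
    (hY : IsStarDecVOrder Y (By ++ [y₀])) (hCx : Cx ≠ [])
    (ihX : ∀ x ∈ verts X, JoinPreservesStarDecV (lk {x} X) Y)
    (ihY : ∀ y ∈ verts Y, JoinPreservesStarDecV X (lk {y} Y)) :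
    IsStarDecVOrder (join X Y)
      (Ax.map Sum.inl ++ (By.map Sum.inr ++ (Cx.map Sum.inl ++ [Sum.inr y₀]))) where
  pure := by
    obtain ⟨kX, hkX, hpX⟩ := hX.pure
    obtain ⟨kY, hkY, hpY⟩ := hY.pure
    exact ⟨kX + kY + 1, by omega, hpX.join hpY⟩
  nodup := by
    have hperm : (Ax.map Sum.inl ++ (By.map Sum.inr ++ (Cx.map Sum.inl ++ [Sum.inr y₀]))).Perm
        ((Ax ++ Cx).map Sum.inl ++ (By ++ [y₀]).map Sum.inr) := by
      simpa using (List.perm_append_comm_assoc (By.map Sum.inr) _ [Sum.inr y₀]).append_left _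
    rw [hperm.nodup_iff, List.nodup_append]
    exact ⟨hX.nodup.map Sum.inl_injective, hY.nodup.map Sum.inr_injective, by simp⟩
  toFinset_eq := by
    rw [verts_join hX.nonempty hY.nonempty]
    ext (a | b) <;> simp [hX.mem_verts_iff, hY.mem_verts_iff, or_comm]
  link _ _ h hS := hX.join_link hY hCx ihX ihY h hS
  last v hv := by
    have hy₀ : y₀ ∈ verts Y := hY.mem_verts_iff.2 (by simp)
    obtain rfl : Sum.inr y₀ = v := by simpa [List.singleton_suffix_iff_getLast?_eq_some] using hv
    rw [lk_inr_join, verts_join hX.nonempty (lk_nonempty hy₀)]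
    exact (ihY y₀ hy₀ _ _ (hX.starDecV_verts (by simp [hCx]))
      (hY.last y₀ (List.suffix_append By [y₀]))).1

end JoinOrder

section JoinInduction

variable {α β : Type*} [DecidableEq α] [DecidableEq β]

theorem JoinPreservesStarDecV.of_links {X : Finset (Finset α)} {Y : Finset (Finset β)}
    (ihX : ∀ x ∈ verts X, JoinPreservesStarDecV (lk {x} X) Y)
    (ihY : ∀ y ∈ verts Y, JoinPreservesStarDecV X (lk {y} Y)) :
    JoinPreservesStarDecV X Y := by
  intro X₀ Y₀ h₁ h₂
  rcases h₁.exists_order with ⟨rfl, rfl⟩ | ⟨_, Cx, hX, ⟨Ax, rfl⟩, hCx, rfl⟩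
  · rw [join_empty_left, ← image_inl_union_image_inr, image_empty, empty_union]
    refine ⟨h₂.image Sum.inr_injective, ?_⟩
    rintro y rfl
    simpa using h₂.image Sum.inr_injective
  rcases h₂.exists_order with ⟨rfl, rfl⟩ | ⟨Ly, Sy, hY, hSy, hSy_ne, rfl⟩
  · rw [join_empty_right, ← image_inl_union_image_inr, image_empty, union_empty]
    exact ⟨h₁.image Sum.inl_injective, fun y hy => absurd hy.symm (singleton_ne_empty y)⟩
  obtain ⟨By, y₀, rfl⟩ : ∃ By y₀, Ly = By ++ [y₀] := by
    simpa [hSy_ne] using (List.eq_nil_or_concat Ly).resolve_left (by rintro rfl; simp_all)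
  obtain ⟨Sy, rfl, hSyBy⟩ := (List.suffix_concat_iff.1 hSy).resolve_left hSy_ne
  have hL := hX.join hY hCx ihX ihY
  refine ⟨?_, fun y hy => ?_⟩
  · convert hL.starDecV (S := Sy.map Sum.inr ++ (Cx.map Sum.inl ++ [Sum.inr y₀])) ?_ (by simp)
      using 1
    · ext (a | b) <;> simp [or_comm]
    · exact List.suffix_append_of_suffix (List.suffix_append_self_iff.2 (hSyBy.map _))
  · obtain rfl : y₀ = y := by simpa using hy.subset (List.mem_toFinset.2 (by simp))
    simpa using hL.starDecV (S := [Sum.inr y₀])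
      (by simp [List.singleton_suffix_iff_getLast?_eq_some]) (by simp)

theorem joinPreservesStarDecV (X : Finset (Finset α)) (Y : Finset (Finset β)) :
    JoinPreservesStarDecV X Y := by
  induction hn : X.sup card + Y.sup card using Nat.strong_induction_on generalizing X Y with
  | _ n ih =>
  subst hn
  exact .of_links (fun x hx => ih _ (by have := sup_card_lk_lt hx; omega) _ _ rfl)
    (fun y hy => ih _ (by have := sup_card_lk_lt hy; omega) _ _ rfl)

end JoinInduction

theorem join_starDecV_pairs_general {α β : Type*} [DecidableEq α] [DecidableEq β]
    (X : Finset (Finset α)) (Y : Finset (Finset β))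
    (X₀ : Finset α) (Y₀ : Finset β)
    (h1 : StarDecV X X₀) (h2 : StarDecV Y Y₀) :
    StarDecV (join X Y) (X₀.image Sum.inl ∪ Y₀.image Sum.inr) ∧
      (Y₀.card = 1 → StarDecV (join X Y) (Y₀.image Sum.inr)) := by
  obtain ⟨hunion, hsingle⟩ := joinPreservesStarDecV X Y X₀ Y₀ h1 h2
  refine ⟨image_inl_union_image_inr X₀ Y₀ ▸ hunion, fun hcard => ?_⟩
  obtain ⟨y, rfl⟩ := card_eq_one.1 hcard
  simpa using hsingle y rfl

/-- If the pairs `(sd X, X₀)` and `(sd Y, Y₀)` are star decomposable in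
vertices, then so is `(sd (X * Y), X₀ ⊔ Y₀)`.  Moreover if `|Y₀| = 1`, then
`(sd (X * Y), Y₀)` is star decomposable in vertices. -/
theorem join_starDecV_pairs {α β : Type*} [DecidableEq α] [DecidableEq β]
    (X : Finset (Finset α)) (Y : Finset (Finset β)) (hX : IsCplx X) (hY : IsCplx Y)
    (hpX : ∃ dX : ℤ, PureDim X dX) (hpY : ∃ dY : ℤ, PureDim Y dY)
    (X₀ : Finset α) (Y₀ : Finset β) (hX₀ : X₀ ⊆ verts X) (hY₀ : Y₀ ⊆ verts Y)
    (h1 : StarDecV X X₀) (h2 : StarDecV Y Y₀) :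
    StarDecV (join X Y) (X₀.image Sum.inl ∪ Y₀.image Sum.inr) ∧
      (Y₀.card = 1 → StarDecV (join X Y) (Y₀.image Sum.inr)) :=
  join_starDecV_pairs_general X Y X₀ Y₀ h1 h2

end Paper
end

section
/- Let K be a collapsible simplicial complex and let w be an arbitrary vertex of K. Then K collapses to w: there is a sequence of elementary collapses transforming K into the complex {∅, {w}}. -/
/-! Common definitions: finite abstract simplicial complexes, links, stars,
barycentric subdivision, joins, collapsibility, shellability, vertex
decomposability, star decomposability (also "in vertices"), and simplicial
homology (reduced, over ℤ and ℤ₂). -/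

namespace Paper

open Finset

variable {V : Type*} [DecidableEq V]

lemma collapsesTo_subset {K K' : Finset (Finset V)} (h : CollapsesTo K K') : K' ⊆ K := by
  induction h with
  | refl => exact subset_rfl
  | tail _ hstep ih =>
    obtain ⟨σ, hσ, τ, hτ, _, _, hEq⟩ := hstep
    refine subset_trans ?_ ih
    rw [hEq]
    exact (Finset.erase_subset _ _).trans (Finset.erase_subset _ _)

lemma isCplx_elemCollapse {K K' : Finset (Finset V)} (hK : IsCplx K)
    (h : ElemCollapse K K') : IsCplx K' := by
  obtain ⟨σ, hσ, τ, hτ, hst, huniq, hEq⟩ := h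
  subst hEq
  intro ρ hρ ρ' hρ'
  simp only [Finset.mem_erase] at hρ ⊢
  obtain ⟨hρτ, hρσ, hρK⟩ := hρ
  refine ⟨?_, ?_, hK ρ hρK ρ' hρ'⟩
  · rintro rfl
    exact hρτ (huniq ρ hρK (lt_of_lt_of_le hst hρ'))
  · rintro rfl
    exact hρτ (huniq ρ hρK (lt_of_le_of_ne hρ' (Ne.symm hρσ)))

lemma lift_collapse (w x : V) (hwx : w ≠ x) {L M : Finset (Finset V)}
    (h : CollapsesTo L M) (hwL : ∀ s ∈ L, w ∉ s) (h0 : ∅ ∈ M) (h1 : ({x} : Finset V) ∈ M) :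
    CollapsesTo (L ∪ {{w}, ({w, x} : Finset V)}) (M ∪ {{w}, ({w, x} : Finset V)}) := by
  induction h with
  | refl => exact Relation.ReflTransGen.refl
  | @tail b c hLb hbc ih =>
    obtain ⟨σ, hσ, τ, hτ, hst, huniq, hEq⟩ := hbc
    have hbL : b ⊆ L := collapsesTo_subset hLb
    have hwσ : w ∉ σ := hwL σ (hbL hσ)
    have hwτ : w ∉ τ := hwL τ (hbL hτ)
    have hσnc : σ ∉ c := by
      rw [hEq]
      intro hmem
      exact (Finset.mem_erase.mp (Finset.mem_of_mem_erase hmem)).1 rfl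
    have hσne : σ ≠ ∅ := by rintro rfl; exact hσnc h0
    have hσnx : σ ≠ {x} := by rintro rfl; exact hσnc h1
    refine Relation.ReflTransGen.tail (ih ?_ ?_) ?_
    · exact Finset.mem_of_mem_erase (Finset.mem_of_mem_erase (hEq ▸ h0))
    · exact Finset.mem_of_mem_erase (Finset.mem_of_mem_erase (hEq ▸ h1))
    · refine ⟨σ, Finset.mem_union_left _ hσ, τ, Finset.mem_union_left _ hτ, hst, ?_, ?_⟩
      · intro ρ hρ hσρ
        rcases Finset.mem_union.mp hρ with hρb | hρA
        · exact huniq ρ hρb hσρ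
        · exfalso
          rcases Finset.mem_insert.mp hρA with rfl | hρA
          · rcases Finset.subset_singleton_iff.mp hσρ.1 with rfl | rfl
            · exact hσne rfl
            · exact hwσ (Finset.mem_singleton_self w)
          · rw [Finset.mem_singleton] at hρA
            subst hρA
            have hsx : σ ⊆ {x} := by
              intro a ha
              have := hσρ.1 ha
              rcases Finset.mem_insert.mp this with rfl | hax
              · exact absurd ha hwσ
              · exact hax
            rcases Finset.subset_singleton_iff.mp hsx with rfl | rfl
            · exact hσne rfl
            · exact hσnx rfl
      · have hσA : σ ∉ ({{w}, ({w, x} : Finset V)} : Finset (Finset V)) := by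
          intro hmem
          rcases Finset.mem_insert.mp hmem with rfl | hmem
          · exact hwσ (Finset.mem_singleton_self w)
          · rw [Finset.mem_singleton] at hmem
            subst hmem
            exact hwσ (Finset.mem_insert_self w _)
        have hτA : τ ∉ ({{w}, ({w, x} : Finset V)} : Finset (Finset V)) := by
          intro hmem
          rcases Finset.mem_insert.mp hmem with rfl | hmem
          · exact hwτ (Finset.mem_singleton_self w)
          · rw [Finset.mem_singleton] at hmem
            subst hmem
            exact hwτ (Finset.mem_insert_self w _)
        rw [hEq, Finset.erase_union_distrib, Finset.erase_union_distrib,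
          Finset.erase_eq_of_notMem hσA, Finset.erase_eq_of_notMem hτA]

/-- A collapsible complex collapses to any of its vertices. -/
theorem collapsible_to_any_vertex {V : Type*} [DecidableEq V] (K : Finset (Finset V))
    (hK : IsCplx K) (h : Collapsible K) (w : V) (hw : ({w} : Finset V) ∈ K) :
    CollapsesTo K ({∅, {w}} : Finset (Finset V)) := by
  obtain ⟨v, hv⟩ := h
  revert hK
  revert w
  induction hv using Relation.ReflTransGen.head_induction_on with
  | refl =>
    intro w hw _
    rcases Finset.mem_insert.mp hw with h0 | h1
    · exact absurd h0 (Finset.singleton_ne_empty w)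
    · rw [Finset.mem_singleton] at h1
      have : w = v := Finset.singleton_injective h1
      subst this
      exact Relation.ReflTransGen.refl
  | @head a c hstep hrest ih =>
    intro w hw hK
    have hKc : IsCplx c := isCplx_elemCollapse hK hstep
    obtain ⟨σ, hσ, τ, hτ, hst, huniq, hEq⟩ := hstep
    by_cases hwc : ({w} : Finset V) ∈ c
    · exact (ih w hwc hKc).head ⟨σ, hσ, τ, hτ, hst, huniq, hEq⟩
    · have hwστ : ({w} : Finset V) = σ ∨ ({w} : Finset V) = τ := by
        by_contra hcon
        push_neg at hcon
        exact hwc (hEq ▸ Finset.mem_erase.mpr ⟨hcon.2, Finset.mem_erase.mpr ⟨hcon.1, hw⟩⟩)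
      rcases hwστ with hwσ | hwτ
      · -- {w} = σ, the free face; its unique coface is an edge {w, x}
        subst hwσ
        obtain ⟨x, hxτ, hxw⟩ := Finset.exists_of_ssubset hst
        rw [Finset.mem_singleton] at hxw
        have hwτ : w ∈ τ := hst.1 (Finset.mem_singleton_self w)
        have hwxa : ({w, x} : Finset V) ∈ a :=
          hK τ hτ _ (Finset.insert_subset hwτ (Finset.singleton_subset_iff.mpr hxτ))
        have hτwx : τ = ({w, x} : Finset V) := by
          refine (huniq _ hwxa ?_).symm
          refine Finset.ssubset_iff_of_subset (Finset.singleton_subset_iff.mpr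
            (Finset.mem_insert_self w _)) |>.mpr ⟨x, Finset.mem_insert_of_mem
            (Finset.mem_singleton_self x), by simp [hxw]⟩
        have hwnotc : ∀ s ∈ c, w ∉ s := by
          intro s hs hws
          rw [hEq] at hs
          rw [Finset.mem_erase, Finset.mem_erase] at hs
          obtain ⟨hsτ, hsσ, hsa⟩ := hs
          have : ({w} : Finset V) ⊂ s :=
            lt_of_le_of_ne (Finset.singleton_subset_iff.mpr hws) (Ne.symm hsσ)
          exact hsτ (huniq s hsa this)
        have hxc : ({x} : Finset V) ∈ c := by
          rw [hEq, Finset.mem_erase, Finset.mem_erase]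
          refine ⟨?_, ?_, hK τ hτ _ (Finset.singleton_subset_iff.mpr hxτ)⟩
          · intro hcon
            rw [← hcon] at hwτ
            exact hxw (Finset.mem_singleton.mp hwτ).symm
          · intro hcon
            exact hxw (Finset.singleton_injective hcon)
        have hc : CollapsesTo c ({∅, {x}} : Finset (Finset V)) := ih x hxc hKc
        have hlift := lift_collapse w x (Ne.symm hxw) hc hwnotc
          (Finset.mem_insert_self _ _)
          (Finset.mem_insert_of_mem (Finset.mem_singleton_self _))
        have ha : a = c ∪ {{w}, ({w, x} : Finset V)} := by
          ext ρ
          rw [hEq]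
          simp only [Finset.mem_union, Finset.mem_erase, Finset.mem_insert,
            Finset.mem_singleton]
          constructor
          · intro hρ
            by_cases h1 : ρ = ({w} : Finset V)
            · exact Or.inr (Or.inl h1)
            · by_cases h2 : ρ = τ
              · exact Or.inr (Or.inr (h2.trans hτwx))
              · exact Or.inl ⟨h2, h1, hρ⟩
          · rintro (⟨_, _, hρ⟩ | rfl | rfl)
            · exact hρ
            · exact hσ
            · exact hτwx ▸ hτ
        have hfinal : ElemCollapse (({∅, {x}} : Finset (Finset V)) ∪ {{w}, ({w, x} : Finset V)})
            ({∅, {w}} : Finset (Finset V)) := by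
          refine ⟨{x}, Finset.mem_union_left _ (Finset.mem_insert_of_mem
            (Finset.mem_singleton_self _)), {w, x},
            Finset.mem_union_right _ (Finset.mem_insert_of_mem (Finset.mem_singleton_self _)),
            ?_, ?_, ?_⟩
          · exact Finset.ssubset_insert (by simp [Ne.symm hxw])
          · intro ρ hρ hxρ
            simp only [Finset.mem_union, Finset.mem_insert, Finset.mem_singleton] at hρ
            rcases hρ with (rfl | rfl) | (rfl | rfl)
            · exact absurd (hxρ.1 (Finset.mem_singleton_self x)) (Finset.notMem_empty x)
            · exact absurd subset_rfl hxρ.2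
            · have := hxρ.1 (Finset.mem_singleton_self x)
              rw [Finset.mem_singleton] at this
              exact absurd this hxw
            · rfl
          · ext ρ
            simp only [Finset.mem_erase, Finset.mem_union, Finset.mem_insert,
              Finset.mem_singleton]
            constructor
            · rintro (rfl | rfl)
              · exact ⟨Ne.symm (Finset.insert_ne_empty w {x}),
                  Ne.symm (Finset.singleton_ne_empty x), Or.inl (Or.inl rfl)⟩
              · refine ⟨?_, ?_, Or.inr (Or.inl rfl)⟩
                · intro hcon
                  have : x ∈ ({w} : Finset V) := hcon ▸ Finset.mem_insert_of_mem
                    (Finset.mem_singleton_self x)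
                  exact hxw (Finset.mem_singleton.mp this)
                · intro hcon
                  exact hxw (Finset.singleton_injective hcon).symm
            · rintro ⟨h1, h2, (rfl | rfl) | (rfl | rfl)⟩
              · exact Or.inl rfl
              · exact absurd rfl h2
              · exact Or.inr rfl
              · exact absurd rfl h1
        rw [ha]
        exact hlift.tail hfinal
      · -- {w} = τ : then σ = ∅ and a = {∅, {w}}
        subst hwτ
        have hσe : σ = ∅ := by
          rcases Finset.subset_singleton_iff.mp hst.1 with h0 | h1
          · exact h0
          · exact absurd h1 hst.ne
        subst hσe
        have haK : a = ({∅, {w}} : Finset (Finset V)) := by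
          ext ρ
          simp only [Finset.mem_insert, Finset.mem_singleton]
          constructor
          · intro hρ
            by_cases hρe : ρ = ∅
            · exact Or.inl hρe
            · exact Or.inr (huniq ρ hρ (Finset.nonempty_iff_ne_empty.mpr hρe).empty_ssubset)
          · rintro (rfl | rfl)
            · exact hσ
            · exact hτ
        rw [haK]
        exact Relation.ReflTransGen.refl

end Paper
end
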